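/- arXiv:1210.5632 — 5 statements merged into one kernel-verified Lean document; each statement's English description precedes it below -/
import Mathlib

section
/- The polynomials δ₁δ₂δ₁(y⁴) and δ₂δ₁δ₂(y⁴) are linearly independent over ℂ; in particular there is no scalar λ ∈ ℂ with δ₁δ₂δ₁ = λ·δ₂δ₁δ₂, so the Demazure operators associated to the braid diagram of the complex reflection group G₄ do not satisfy the braid relation, even up to a scalar. Explicitly, 3·δ₁δ₂δ₁(y⁴) = (5j² − 2j)·x + (10j + 8j²)·y and 9·δ₂δ₁δ₂(y⁴) = (4j − 13j²)·x + (2j² − 2j)·y. -/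
noncomputable section

open MvPolynomial

/-- j = exp(2πi/3). -/
def j : ℂ := Complex.exp (2 * Real.pi * Complex.I / 3)

/-- The action of the generator s₁ = diag(1, j) of G₄ on ℂ[x,y] (x = X 0, y = X 1). -/
def σ₁ : MvPolynomial (Fin 2) ℂ →ₐ[ℂ] MvPolynomial (Fin 2) ℂ :=
  aeval ![X 0, C j * X 1]

/-- The action of the generator s₂ = (1/3)[[j−j², 2j+j²],[4j+2j², −j−2j²]] of G₄ on ℂ[x,y]:
x ↦ ((j−j²)x + (4j+2j²)y)/3, y ↦ ((2j+j²)x + (−j−2j²)y)/3. -/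
def σ₂ : MvPolynomial (Fin 2) ℂ →ₐ[ℂ] MvPolynomial (Fin 2) ℂ :=
  aeval ![C ((j - j^2)/3) * X 0 + C ((4*j + 2*j^2)/3) * X 1,
          C ((2*j + j^2)/3) * X 0 + C ((-j - 2*j^2)/3) * X 1]

/-! The hypotheses determine δ₁ and δ₂ because ℂ[x, y] is a domain: `δ p = q` as soon as
`s·p − p = r·q`. Each step of the two chains starting from y⁴ is thus a polynomial identity, which
holds modulo j² + j + 1 = 0. Both chains end in linear forms, and the determinant of their
coefficients is (40 + 50j)/9, which is nonzero since j is not real. -/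

theorem j_sq_add_j_add_one : j ^ 2 + j + 1 = 0 := by
  have h := (Complex.isPrimitiveRoot_exp 3 three_ne_zero).geom_sum_eq_zero (by norm_num)
  simp only [Finset.sum_range_succ, Finset.sum_range_zero] at h
  rw [j]
  linear_combination h

def IsDemazureOperator {A : Type*} [Ring A] (σ δ : A → A) (r : A) : Prop :=
  ∀ p, σ p - p = r * δ p

theorem IsDemazureOperator.apply_eq {A : Type*} [Ring A] [IsDomain A] {σ δ : A → A} {r : A}
    (hδ : IsDemazureOperator σ δ r) (hr : r ≠ 0) {p q : A} (h : σ p - p = r * q) : δ p = q :=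
  mul_left_cancel₀ hr ((hδ p).symm.trans h)

theorem X_zero_add_X_one_ne_zero : (X 0 + X 1 : MvPolynomial (Fin 2) ℂ) ≠ 0 := fun h => by
  simpa using congrArg (eval ![1, 0]) h

theorem linearIndependent_linear_forms_of_det_ne_zero {K : Type*} [Field K] {a b c d : K}
    (h : a * d - b * c ≠ 0) :
    LinearIndependent K
      (![C a * X 0 + C b * X 1, C c * X 0 + C d * X 1] : Fin 2 → MvPolynomial (Fin 2) K) := by
  refine LinearIndependent.pair_iff.mpr fun s t hst => ?_
  have e₀ : s * a + t * c = 0 := by simpa using congrArg (eval ![1, 0]) hst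
  have e₁ : s * b + t * d = 0 := by simpa using congrArg (eval ![0, 1]) hst
  have hs : s * (a * d - b * c) = 0 := by linear_combination d * e₀ - c * e₁
  have ht : t * (a * d - b * c) = 0 := by linear_combination a * e₁ - b * e₀
  exact ⟨(mul_eq_zero.mp hs).resolve_right h, (mul_eq_zero.mp ht).resolve_right h⟩

theorem LinearMap.ne_smul_of_linearIndependent_apply {R M N : Type*} [CommRing R] [Nontrivial R]
    [AddCommGroup M] [Module R M] [AddCommGroup N] [Module R N] {f g : M →ₗ[R] N} {x : M}
    (h : LinearIndependent R ![f x, g x]) (c : R) : f ≠ c • g := fun hfg =>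
  one_ne_zero (LinearIndependent.pair_iff.mp h 1 (-c) (by simp [hfg])).1

section

variable {δ₁ δ₂ : MvPolynomial (Fin 2) ℂ → MvPolynomial (Fin 2) ℂ}

theorem δ₁_δ₂_δ₁_X_one_pow_four (h₁ : IsDemazureOperator σ₁ δ₁ (X 1))
    (h₂ : IsDemazureOperator σ₂ δ₂ (X 0 + X 1)) :
    δ₁ (δ₂ (δ₁ (X 1 ^ 4))) = C ((-5 - 7 * j) / 3) * X 0 + C ((-8 + 2 * j) / 3) * X 1 := by
  have hy : δ₁ (X 1 ^ 4) = C (j - 1) * X 1 ^ 3 :=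
    h₁.apply_eq (X_ne_zero 1) <| MvPolynomial.funext fun v => by
      simp only [σ₁, map_sub, map_mul, map_pow, aeval_X, eval_X, eval_C, Matrix.cons_val_zero,
        Matrix.cons_val_one]
      grind [j_sq_add_j_add_one]
  have hxy : δ₂ (C (j - 1) * X 1 ^ 3) = C ((-1 - j) / 3) * X 0 ^ 2
      + C ((1 + 4 * j) / 3) * X 0 * X 1 + C ((2 - 4 * j) / 3) * X 1 ^ 2 :=
    h₂.apply_eq X_zero_add_X_one_ne_zero <| MvPolynomial.funext fun v => by
      simp only [σ₂, map_sub, map_add, map_mul, map_pow, aeval_X, aeval_C, eval_X, eval_C,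
        algebraMap_eq, Matrix.cons_val_zero, Matrix.cons_val_one]
      grind [j_sq_add_j_add_one]
  rw [hy, hxy]
  refine h₁.apply_eq (X_ne_zero 1) <| MvPolynomial.funext fun v => ?_
  simp only [σ₁, map_sub, map_add, map_mul, map_pow, aeval_X, aeval_C, eval_X, eval_C,
    algebraMap_eq, Matrix.cons_val_zero, Matrix.cons_val_one]
  grind [j_sq_add_j_add_one]

theorem δ₂_δ₁_δ₂_X_one_pow_four (h₁ : IsDemazureOperator σ₁ δ₁ (X 1))
    (h₂ : IsDemazureOperator σ₂ δ₂ (X 0 + X 1)) :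
    δ₂ (δ₁ (δ₂ (X 1 ^ 4))) = C ((13 + 17 * j) / 9) * X 0 + C ((-2 - 4 * j) / 9) * X 1 := by
  have hx : δ₂ (X 1 ^ 4) = C ((-1 - j) / 9) * X 0 ^ 3 + C ((1 + 5 * j) / 9) * X 0 ^ 2 * X 1
      + C ((5 - 5 * j) / 9) * X 0 * X 1 ^ 2 + C ((-9 + j) / 9) * X 1 ^ 3 :=
    h₂.apply_eq X_zero_add_X_one_ne_zero <| MvPolynomial.funext fun v => by
      simp only [σ₂, map_sub, map_add, map_mul, map_pow, aeval_X, eval_X, eval_C,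
        Matrix.cons_val_zero, Matrix.cons_val_one]
      grind [j_sq_add_j_add_one]
  have hyx : δ₁ (C ((-1 - j) / 9) * X 0 ^ 3 + C ((1 + 5 * j) / 9) * X 0 ^ 2 * X 1
      + C ((5 - 5 * j) / 9) * X 0 * X 1 ^ 2 + C ((-9 + j) / 9) * X 1 ^ 3) =
      C ((-2 - 3 * j) / 3) * X 0 ^ 2 + C (-5 / 3) * X 0 * X 1 :=
    h₁.apply_eq (X_ne_zero 1) <| MvPolynomial.funext fun v => by
      simp only [σ₁, map_sub, map_add, map_mul, map_pow, aeval_X, aeval_C, eval_X, eval_C,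
        algebraMap_eq, Matrix.cons_val_zero, Matrix.cons_val_one]
      grind [j_sq_add_j_add_one]
  rw [hx, hyx]
  refine h₂.apply_eq X_zero_add_X_one_ne_zero <| MvPolynomial.funext fun v => ?_
  simp only [σ₂, map_sub, map_add, map_mul, map_pow, aeval_X, aeval_C, eval_X, eval_C,
    algebraMap_eq, Matrix.cons_val_zero, Matrix.cons_val_one]
  grind [j_sq_add_j_add_one]

end

/-- if δ₁, δ₂ are the Demazure operators of G₄, i.e. the (unique) ℂ-linear maps
with s₁·p − p = y·δ₁(p) and s₂·p − p = (x+y)·δ₂(p), then δ₁δ₂δ₁(y⁴) and δ₂δ₁δ₂(y⁴) are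
linearly independent, hence δ₁δ₂δ₁ is not a scalar multiple of δ₂δ₁δ₂ (the braid relation fails
even up to a scalar); explicitly, 3·δ₁δ₂δ₁(y⁴) = (5j²−2j)x + (10j+8j²)y and
9·δ₂δ₁δ₂(y⁴) = (4j−13j²)x + (2j²−2j)y. -/
theorem G4_demazure_braid_fails
    (δ₁ δ₂ : MvPolynomial (Fin 2) ℂ →ₗ[ℂ] MvPolynomial (Fin 2) ℂ)
    (h₁ : ∀ p, σ₁ p - p = X 1 * δ₁ p)
    (h₂ : ∀ p, σ₂ p - p = (X 0 + X 1) * δ₂ p) :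
    LinearIndependent ℂ ![δ₁ (δ₂ (δ₁ ((X 1 : MvPolynomial (Fin 2) ℂ) ^ 4))),
        δ₂ (δ₁ (δ₂ ((X 1 : MvPolynomial (Fin 2) ℂ) ^ 4)))]
    ∧ (∀ lam : ℂ, δ₁ ∘ₗ δ₂ ∘ₗ δ₁ ≠ lam • (δ₂ ∘ₗ δ₁ ∘ₗ δ₂))
    ∧ (3 : ℂ) • δ₁ (δ₂ (δ₁ ((X 1 : MvPolynomial (Fin 2) ℂ) ^ 4)))
        = C (5*j^2 - 2*j) * X 0 + C (10*j + 8*j^2) * X 1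
    ∧ (9 : ℂ) • δ₂ (δ₁ (δ₂ ((X 1 : MvPolynomial (Fin 2) ℂ) ^ 4)))
        = C (4*j - 13*j^2) * X 0 + C (2*j^2 - 2*j) * X 1 := by
  have hu := δ₁_δ₂_δ₁_X_one_pow_four h₁ h₂
  have hv := δ₂_δ₁_δ₂_X_one_pow_four h₁ h₂
  have hli : LinearIndependent ℂ ![δ₁ (δ₂ (δ₁ ((X 1 : MvPolynomial (Fin 2) ℂ) ^ 4))),
      δ₂ (δ₁ (δ₂ ((X 1 : MvPolynomial (Fin 2) ℂ) ^ 4)))] := by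
    rw [hu, hv]
    exact linearIndependent_linear_forms_of_det_ne_zero (by grind [j_sq_add_j_add_one])
  refine ⟨hli, LinearMap.ne_smul_of_linearIndependent_apply hli, ?_, ?_⟩
  · rw [hu]
    refine MvPolynomial.funext fun v => ?_
    simp only [smul_eq_C_mul, map_add, map_mul, eval_X, eval_C]
    grind [j_sq_add_j_add_one]
  · rw [hv]
    refine MvPolynomial.funext fun v => ?_
    simp only [smul_eq_C_mul, map_add, map_mul, eval_X, eval_C]
    grind [j_sq_add_j_add_one]
end
end

section
/- Let m ∈ ℤ with m ≠ 1 and m ≠ −1. The unital associative ℤ-algebra presented by generators s₁, s₂ and relations s₁s₂s₁ = s₂s₁s₂, s₁³ = m, s₂³ = m (where m denotes m·1) is not finitely generated as a ℤ-module. -/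
/-!
Pick a prime `p ∣ m`, which exists since `m ≠ ±1`. Over `𝔽_p` the relations hold for two
nilpotent partial shifts on `𝔽_p^(ℕ)`: `s₁` moves `eᵢ` to `eᵢ₊₁` when `i ≡ 0, 1 (mod 4)`, `s₂`
when `i ≡ 2, 3 (mod 4)`, and kills `eᵢ` otherwise. Then `(s₂²s₁²)ⁿ e₀ = e₄ₙ`, so the orbit of `e₀`
is infinite. If the algebra were a finitely generated abelian group, this orbit would be a
finitely generated group of exponent `p`, hence finite.
-/

noncomputable section

/-- The relations s₁s₂s₁ = s₂s₁s₂, s₁³ = m, s₂³ = m over ℤ (s₁ = ι 0, s₂ = ι 1). -/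
inductive Rel15 (m : ℤ) :
    FreeAlgebra ℤ (Fin 2) → FreeAlgebra ℤ (Fin 2) → Prop
  | braid : Rel15 m (FreeAlgebra.ι ℤ 0 * FreeAlgebra.ι ℤ 1 * FreeAlgebra.ι ℤ 0)
      (FreeAlgebra.ι ℤ 1 * FreeAlgebra.ι ℤ 0 * FreeAlgebra.ι ℤ 1)
  | cube1 : Rel15 m (FreeAlgebra.ι ℤ 0 ^ 3) (algebraMap ℤ (FreeAlgebra ℤ (Fin 2)) m)
  | cube2 : Rel15 m (FreeAlgebra.ι ℤ 1 ^ 3) (algebraMap ℤ (FreeAlgebra ℤ (Fin 2)) m)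

theorem AddMonoidHom.finite_range_of_isAddTorsion {M N : Type*} [AddCommGroup M] [AddGroup.FG M]
    [AddCommGroup N] (hN : IsAddTorsion N) (f : M →+ N) : (Set.range f).Finite := by
  have := AddCommGroup.finite_of_fg_isAddTorsion f.range (hN.addSubgroup f.range)
  exact f.coe_range ▸ Set.toFinite (f.range : Set N)

open Finsupp

section BlockShift

variable (R : Type*) [Semiring R]

def shiftOn (S : ℕ → Prop) [DecidablePred S] : (ℕ →₀ R) →ₗ[R] (ℕ →₀ R) :=
  Finsupp.lsum ℕ fun i => if S i then Finsupp.lsingle (i + 1) else 0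

variable {R}

theorem shiftOn_single (S : ℕ → Prop) [DecidablePred S] (i : ℕ) (c : R) :
    shiftOn R S (single i c) = if S i then single (i + 1) c else 0 := by
  simp only [shiftOn, lsum_single]
  split_ifs <;> rfl

variable (R)

abbrev blockShift (j : Fin 2) : Module.End R (ℕ →₀ R) :=
  shiftOn R fun i => i / 2 % 2 = j

variable {R}

/-- `⌊i/2⌋` and `⌊(i+2)/2⌋` have different parities, so `blockShift j` cannot act both before and
after one further shift. This gives both cube relations and the braid relation, whose two sides
vanish. -/
theorem blockShift_mul_blockShift_mul_blockShift (j k : Fin 2) :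
    blockShift R j * blockShift R k * blockShift R j = 0 := by
  refine Finsupp.lhom_ext fun i c => ?_
  simp only [Module.End.mul_apply, LinearMap.zero_apply, shiftOn_single, apply_ite,
    LinearMap.map_zero]
  split_ifs <;> first | rfl | omega

theorem blockShift_period_single (k : ℕ) (c : R) :
    (blockShift R 1 * blockShift R 1 * blockShift R 0 * blockShift R 0) (single (4 * k) c) =
      single (4 * (k + 1)) c := by
  simp only [Module.End.mul_apply, shiftOn_single, apply_ite, LinearMap.map_zero]
  split_ifs <;> first | omega | congr 1

theorem blockShift_period_pow_single (n k : ℕ) (c : R) :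
    ((blockShift R 1 * blockShift R 1 * blockShift R 0 * blockShift R 0) ^ n) (single (4 * k) c) =
      single (4 * (k + n)) c := by
  induction n generalizing k with
  | zero => rfl
  | succ n ih => rw [pow_succ, Module.End.mul_apply, blockShift_period_single, ih]; ring_nf

end BlockShift

section Representation

variable (R : Type*) [CommRing R] {m : ℤ}

def heckeRep (hm : (m : R) = 0) : RingQuot (Rel15 m) →ₐ[ℤ] Module.End R (ℕ →₀ R) :=
  RingQuot.liftAlgHom ℤ ⟨FreeAlgebra.lift ℤ (blockShift R), fun a b h => by
    have hmEnd : algebraMap ℤ (Module.End R (ℕ →₀ R)) m = 0 := by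
      simpa using congrArg (algebraMap R (Module.End R (ℕ →₀ R))) hm
    cases h <;> simp only [map_mul, FreeAlgebra.lift_ι_apply, AlgHom.commutes, hmEnd,
      pow_three, ← mul_assoc, blockShift_mul_blockShift_mul_blockShift]⟩

theorem heckeRep_mkAlgHom (hm : (m : R) = 0) (x : FreeAlgebra ℤ (Fin 2)) :
    heckeRep R hm (RingQuot.mkAlgHom ℤ (Rel15 m) x) = FreeAlgebra.lift ℤ (blockShift R) x :=
  RingQuot.liftAlgHom_mkAlgHom_apply _ _ _ _

end Representation

/-- for m ∈ ℤ, m ≠ ±1, the ℤ-algebra with generators s₁, s₂ and relations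
s₁s₂s₁ = s₂s₁s₂, s₁³ = m, s₂³ = m is not finitely generated as a ℤ-module. -/
theorem G4_m_hecke_not_finite (m : ℤ) (h1 : m ≠ 1) (h2 : m ≠ -1) :
    ¬ Module.Finite ℤ (RingQuot (Rel15 m)) := by
  intro hfin
  have : AddGroup.FG (RingQuot (Rel15 m)) := Module.Finite.iff_addGroup_fg.mp hfin
  obtain ⟨p, hp, hpm⟩ := Nat.exists_prime_and_dvd (n := m.natAbs) (by omega)
  have : Fact p.Prime := ⟨hp⟩
  have hm : (m : ZMod p) = 0 := (ZMod.intCast_zmod_eq_zero_iff_dvd m p).2 (Int.natCast_dvd.2 hpm)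
  let orbit : RingQuot (Rel15 m) →+ (ℕ →₀ ZMod p) :=
    (LinearMap.applyₗ (single 0 1)).toAddMonoidHom.comp (heckeRep (ZMod p) hm).toAddMonoidHom
  have hfinite := orbit.finite_range_of_isAddTorsion (IsAddTorsion.module_of_finite (ZMod p) _)
  have hmem (n : ℕ) : single (4 * n) (1 : ZMod p) ∈ Set.range orbit :=
    ⟨RingQuot.mkAlgHom ℤ _
      ((FreeAlgebra.ι ℤ 1 * FreeAlgebra.ι ℤ 1 * FreeAlgebra.ι ℤ 0 * FreeAlgebra.ι ℤ 0) ^ n), by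
      simpa [orbit, heckeRep_mkAlgHom] using blockShift_period_pow_single n 0 (1 : ZMod p)⟩
  have hinj : Function.Injective fun n : ℕ => single (4 * n) (1 : ZMod p) := fun a b hab => by
    simpa using single_left_injective one_ne_zero hab
  exact Set.infinite_of_injective_forall_mem hinj hmem hfinite
end
end

section
/- Let k be a nontrivial commutative unital ring. (1) The unital associative k-algebra presented by generators A, B, C and relations ABCA = BCAB = CABC, A² = 0, B² = 0, C² = 0 is not finitely generated as a k-module. (2) The same holds for the unital associative k-algebra presented by generators A, B, C and relations ABCA = BCAB = CABC, A² = A, B² = B, C² = C. -/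
/-!
Sending `C` to `0` makes every braid relation read `0 = 0`, so a representation only has to
respect the quadratic relations for `A` and `B`. Over `k[X]` there are `2 × 2` matrices `A`, `B`
with `A² = B² = 0` (resp. `A² = A`, `B² = B`) such that `AB` is upper triangular with top-left
entry `X`; then `AB` is transcendental over `k`. But in a module-finite `k`-algebra every element
is integral, hence algebraic, and algebraic elements stay algebraic under algebra maps.
-/

noncomputable section

/-- The relations ABCA = BCAB = CABC, A² = B² = C² = 0 (A = ι 0, B = ι 1, C = ι 2). -/
inductive Rel17a (k : Type*) [CommRing k] :
    FreeAlgebra k (Fin 3) → FreeAlgebra k (Fin 3) → Prop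
  | braid1 : Rel17a k
      (FreeAlgebra.ι k 0 * FreeAlgebra.ι k 1 * FreeAlgebra.ι k 2 * FreeAlgebra.ι k 0)
      (FreeAlgebra.ι k 1 * FreeAlgebra.ι k 2 * FreeAlgebra.ι k 0 * FreeAlgebra.ι k 1)
  | braid2 : Rel17a k
      (FreeAlgebra.ι k 1 * FreeAlgebra.ι k 2 * FreeAlgebra.ι k 0 * FreeAlgebra.ι k 1)
      (FreeAlgebra.ι k 2 * FreeAlgebra.ι k 0 * FreeAlgebra.ι k 1 * FreeAlgebra.ι k 2)
  | sq1 : Rel17a k (FreeAlgebra.ι k 0 ^ 2) 0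
  | sq2 : Rel17a k (FreeAlgebra.ι k 1 ^ 2) 0
  | sq3 : Rel17a k (FreeAlgebra.ι k 2 ^ 2) 0

/-- The relations ABCA = BCAB = CABC, A² = A, B² = B, C² = C. -/
inductive Rel17b (k : Type*) [CommRing k] :
    FreeAlgebra k (Fin 3) → FreeAlgebra k (Fin 3) → Prop
  | braid1 : Rel17b k
      (FreeAlgebra.ι k 0 * FreeAlgebra.ι k 1 * FreeAlgebra.ι k 2 * FreeAlgebra.ι k 0)
      (FreeAlgebra.ι k 1 * FreeAlgebra.ι k 2 * FreeAlgebra.ι k 0 * FreeAlgebra.ι k 1)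
  | braid2 : Rel17b k
      (FreeAlgebra.ι k 1 * FreeAlgebra.ι k 2 * FreeAlgebra.ι k 0 * FreeAlgebra.ι k 1)
      (FreeAlgebra.ι k 2 * FreeAlgebra.ι k 0 * FreeAlgebra.ι k 1 * FreeAlgebra.ι k 2)
  | sq1 : Rel17b k (FreeAlgebra.ι k 0 ^ 2) (FreeAlgebra.ι k 0)
  | sq2 : Rel17b k (FreeAlgebra.ι k 1 ^ 2) (FreeAlgebra.ι k 1)
  | sq3 : Rel17b k (FreeAlgebra.ι k 2 ^ 2) (FreeAlgebra.ι k 2)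

open Polynomial

namespace Matrix

variable {k R : Type*} [CommRing k] [Ring R] [Algebra k R] {M : Matrix (Fin 2) (Fin 2) R}

theorem fin_two_pow_apply_zero_zero (hM : M 1 0 = 0) (n : ℕ) : (M ^ n) 0 0 = M 0 0 ^ n := by
  induction n with
  | zero => simp
  | succ n ih => simp [pow_succ, mul_apply, Fin.sum_univ_two, ih, hM]

theorem fin_two_aeval_apply_zero_zero (hM : M 1 0 = 0) (p : k[X]) :
    aeval M p 0 0 = aeval (M 0 0) p := by
  simp [aeval_eq_sum_range, sum_apply, fin_two_pow_apply_zero_zero hM]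

theorem transcendental_of_apply_zero_zero (h : Transcendental k (M 0 0)) (hM : M 1 0 = 0) :
    Transcendental k M := by
  rintro ⟨p, hp, hpM⟩
  exact h ⟨p, hp, by rw [← fin_two_aeval_apply_zero_zero hM, hpM, zero_apply]⟩

end Matrix

theorem RingQuot.not_finite_of_transcendental_lift {k ι S : Type*} [CommRing k] [Nontrivial k]
    [Ring S] [Algebra k S] {r : FreeAlgebra k ι → FreeAlgebra k ι → Prop} (f : ι → S)
    (hf : ∀ ⦃x y⦄, r x y → FreeAlgebra.lift k f x = FreeAlgebra.lift k f y)
    (x : FreeAlgebra k ι) (hx : Transcendental k (FreeAlgebra.lift k f x)) :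
    ¬ Module.Finite k (RingQuot r) := by
  intro _
  apply hx
  simpa using (IsAlgebraic.of_finite k (mkAlgHom k r x)).algHom (liftAlgHom k ⟨_, hf⟩)

section Representations

variable (k : Type*) [CommRing k]

def nilRep : Fin 3 → Matrix (Fin 2) (Fin 2) k[X] := ![!![0, 1; 0, 0], !![0, 0; X, 0], 0]

def idemRep : Fin 3 → Matrix (Fin 2) (Fin 2) k[X] := ![!![1, 1; 0, 0], !![0, 0; X, 1], 0]

variable {k}

theorem Rel17a.lift_nilRep_eq {x y : FreeAlgebra k (Fin 3)} (h : Rel17a k x y) :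
    FreeAlgebra.lift k (nilRep k) x = FreeAlgebra.lift k (nilRep k) y := by
  cases h <;> simp [nilRep, pow_two, ← Matrix.zero_empty]

theorem Rel17b.lift_idemRep_eq {x y : FreeAlgebra k (Fin 3)} (h : Rel17b k x y) :
    FreeAlgebra.lift k (idemRep k) x = FreeAlgebra.lift k (idemRep k) y := by
  cases h <;> simp [idemRep, pow_two, ← Matrix.zero_empty]

theorem transcendental_nilRep_mul : Transcendental k (nilRep k 0 * nilRep k 1) :=
  Matrix.transcendental_of_apply_zero_zero (by simpa [nilRep] using transcendental_X k)
    (by simp [nilRep])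

theorem transcendental_idemRep_mul : Transcendental k (idemRep k 0 * idemRep k 1) :=
  Matrix.transcendental_of_apply_zero_zero (by simpa [idemRep] using transcendental_X k)
    (by simp [idemRep])

end Representations

/-- for any nontrivial commutative ring k, the k-algebras with generators A, B, C
and relations ABCA = BCAB = CABC together with A² = B² = C² = 0 (resp. A² = A, B² = B, C² = C)
are not finitely generated as k-modules. -/
theorem G12_zero_hecke_not_finite (k : Type*) [CommRing k] [Nontrivial k] :
    ¬ Module.Finite k (RingQuot (Rel17a k)) ∧ ¬ Module.Finite k (RingQuot (Rel17b k)) := by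
  constructor
  · exact RingQuot.not_finite_of_transcendental_lift _ (fun _ _ ↦ Rel17a.lift_nilRep_eq)
      (FreeAlgebra.ι k 0 * FreeAlgebra.ι k 1) (by simpa using transcendental_nilRep_mul)
  · exact RingQuot.not_finite_of_transcendental_lift _ (fun _ _ ↦ Rel17b.lift_idemRep_eq)
      (FreeAlgebra.ι k 0 * FreeAlgebra.ι k 1) (by simpa using transcendental_idemRep_mul)
end
end

section
/- Let k be a nontrivial commutative unital ring. The unital associative k-algebra presented by generators t, s and relations stst = tsts, t³ = 0, s² = s is not finitely generated as a k-module. -/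
/-!
The algebra maps onto `k[X]` as a `k`-module. Sending `t` and `s` to the `3 × 3` matrices
`!![0, X, 0; 0, 0, 1; 0, 0, 0]` and `!![1, 0, 0; 0, 0, 0; 1, 0, 0]` over `k[X]` respects the
relations, and `t t s` goes to `diagonal ![X, 0, 0]`. Hence the `(0, 0)` entry of the image of
`p(t t s)` is `p` for every polynomial `p`, and a finitely generated `k`-module cannot surject
onto `k[X]`.
-/

noncomputable section

/-- The relations stst = tsts, t³ = 0, s² = s (t = ι 0, s = ι 1). -/
inductive Rel18 (k : Type*) [CommRing k] :
    FreeAlgebra k (Fin 2) → FreeAlgebra k (Fin 2) → Prop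
  | braid : Rel18 k
      (FreeAlgebra.ι k 1 * FreeAlgebra.ι k 0 * FreeAlgebra.ι k 1 * FreeAlgebra.ι k 0)
      (FreeAlgebra.ι k 0 * FreeAlgebra.ι k 1 * FreeAlgebra.ι k 0 * FreeAlgebra.ι k 1)
  | tcube : Rel18 k (FreeAlgebra.ι k 0 ^ 3) 0
  | ssq : Rel18 k (FreeAlgebra.ι k 1 ^ 2) (FreeAlgebra.ι k 1)

namespace Rel18

open Matrix Polynomial

section Matrices

variable {A : Type*} [Semiring A]

def tMatrix (x : A) : Matrix (Fin 3) (Fin 3) A := !![0, x, 0; 0, 0, 1; 0, 0, 0]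

def sMatrix : Matrix (Fin 3) (Fin 3) A := !![1, 0, 0; 0, 0, 0; 1, 0, 0]

theorem sMatrix_mul_self : (sMatrix : Matrix (Fin 3) (Fin 3) A) * sMatrix = sMatrix := by
  ext i j
  fin_cases i <;> fin_cases j <;> simp [sMatrix]

theorem tMatrix_pow_three (x : A) : tMatrix x ^ 3 = 0 := by
  ext i j
  fin_cases i <;> fin_cases j <;> simp [tMatrix, pow_three]

theorem sMatrix_tMatrix_braid (x : A) :
    sMatrix * tMatrix x * sMatrix * tMatrix x = tMatrix x * sMatrix * tMatrix x * sMatrix := by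
  ext i j
  fin_cases i <;> fin_cases j <;> simp [sMatrix, tMatrix]

theorem tMatrix_mul_tMatrix_mul_sMatrix (x : A) :
    tMatrix x * tMatrix x * sMatrix = diagonal ![x, 0, 0] := by
  ext i j
  fin_cases i <;> fin_cases j <;> simp [sMatrix, tMatrix]

end Matrices

variable {k : Type*} [CommRing k] {A : Type*} [Semiring A] [Algebra k A]

def matrixRep (x : A) : RingQuot (Rel18 k) →ₐ[k] Matrix (Fin 3) (Fin 3) A :=
  RingQuot.liftAlgHom k ⟨FreeAlgebra.lift k ![tMatrix x, sMatrix], fun _ _ h ↦ by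
    cases h <;> simp [tMatrix_pow_three, sMatrix_tMatrix_braid, sq, sMatrix_mul_self]⟩

variable (k) in
def tts : RingQuot (Rel18 k) :=
  RingQuot.mkAlgHom k (Rel18 k) (FreeAlgebra.ι k 0 * FreeAlgebra.ι k 0 * FreeAlgebra.ι k 1)

theorem matrixRep_tts (x : A) : matrixRep x (tts k) = diagonal ![x, 0, 0] := by
  simp [matrixRep, tts, tMatrix_mul_tMatrix_mul_sMatrix]

theorem matrixRep_aeval_tts_apply_zero_zero (x : A) (p : k[X]) :
    matrixRep x (aeval (tts k) p) 0 0 = aeval x p := by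
  rw [← aeval_algHom_apply, matrixRep_tts, ← diagonalAlgHom_apply (R := k), aeval_algHom_apply,
    diagonalAlgHom_apply, diagonal_apply_eq, aeval_pi_apply₂, cons_val_zero]

theorem surjective_entryLinearMap_comp_matrixRep_X :
    Function.Surjective
      (entryLinearMap k k[X] 0 0 ∘ₗ (matrixRep (k := k) (X : k[X])).toLinearMap) :=
  fun p ↦ ⟨aeval (tts k) p, by simp [matrixRep_aeval_tts_apply_zero_zero]⟩

end Rel18

/-- for any nontrivial commutative ring k, the k-algebra with generators t, s and
relations stst = tsts, t³ = 0, s² = s is not finitely generated as a k-module. -/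
theorem G312_degenerate_hecke_not_finite (k : Type*) [CommRing k] [Nontrivial k] :
    ¬ Module.Finite k (RingQuot (Rel18 k)) := fun _ ↦
  Polynomial.not_finite (R := k) <|
    Module.Finite.of_surjective _ Rel18.surjective_entryLinearMap_comp_matrixRep_X
end
end

section
/- Let d ≥ 3 be an integer and let P = ℤ[a₀, a₁, …, a_{d−1}, α, β] be a polynomial ring over ℤ. The unital associative P-algebra presented by generators t, s and relations stst = tsts, t^d = a_{d−1}·t^{d−1} + … + a₁·t + a₀, s² = α·s + β is not finitely generated as a P-module. -/
noncomputable section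

open MvPolynomial

/-- The parameter ring P = ℤ[a₀, …, a_{d−1}, α, β], with aᵢ = X i (i < d), α = X d, β = X (d+1). -/
abbrev P19 (d : ℕ) : Type := MvPolynomial (Fin (d + 2)) ℤ

/-- The relations stst = tsts, t^d = a_{d−1}·t^{d−1} + … + a₁·t + a₀, s² = α·s + β
(t = ι 0, s = ι 1). -/
inductive Rel19 (d : ℕ) :
    FreeAlgebra (P19 d) (Fin 2) → FreeAlgebra (P19 d) (Fin 2) → Prop
  | braid : Rel19 d
      (FreeAlgebra.ι (P19 d) 1 * FreeAlgebra.ι (P19 d) 0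
        * FreeAlgebra.ι (P19 d) 1 * FreeAlgebra.ι (P19 d) 0)
      (FreeAlgebra.ι (P19 d) 0 * FreeAlgebra.ι (P19 d) 1
        * FreeAlgebra.ι (P19 d) 0 * FreeAlgebra.ι (P19 d) 1)
  | tpow : Rel19 d (FreeAlgebra.ι (P19 d) 0 ^ d)
      (∑ i : Fin d, algebraMap (P19 d) _ (X (Fin.castLE (by omega) i))
        * FreeAlgebra.ι (P19 d) 0 ^ (i : ℕ))
  | ssq : Rel19 d (FreeAlgebra.ι (P19 d) 1 ^ 2)
      (algebraMap (P19 d) _ (X ⟨d, by omega⟩) * FreeAlgebra.ι (P19 d) 1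
        + algebraMap (P19 d) _ (X ⟨d + 1, by omega⟩))

/-!
Specialise every parameter to `0`, i.e. let `P` act on `ℤ^(ℕ)` through the constant coefficient.
The algebra then acts on `ℤ^(ℕ)` by two weighted shifts `T` and `S` satisfying `T ^ 3 = 0`,
`S ^ 2 = 0` and `STST = TSTS = 0`, whose sum is the full shift. Hence `e 0` is a cyclic vector, so
`ℤ^(ℕ)` is a quotient of the algebra as a `P`-module; finiteness over `P` would make `ℤ^(ℕ)` finite
over `ℤ` (since `P` acts through `ℤ`), which it is not.
-/

theorem algebraMap_end_eq_zero {R S M : Type*} [CommSemiring R] [Semiring S] [Algebra R S]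
    [AddCommMonoid M] [Module S M] [Module R M] [IsScalarTower R S M] {r : R}
    (h : algebraMap R S r = 0) : algebraMap R (Module.End S M) r = 0 := by
  ext m
  rw [Module.algebraMap_end_apply, ← algebraMap_smul S r m, h, zero_smul, LinearMap.zero_apply]

theorem Module.Finite.of_surjective_orbit {R S A M : Type*} [CommSemiring R] [Semiring S]
    [Algebra R S] [Semiring A] [Algebra R A] [Module.Finite R A] [AddCommMonoid M] [Module S M]
    [Module R M] [IsScalarTower R S M] (ψ : A →ₐ[R] Module.End S M) (v : M)
    (hv : Function.Surjective fun a => ψ a v) : Module.Finite S M :=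
  have : Module.Finite R M :=
    Module.Finite.of_surjective ((LinearMap.applyₗ' R v).comp ψ.toLinearMap) hv
  Module.Finite.of_restrictScalars_finite R S M

namespace ArikiKoike

open Finsupp

section Shift

variable {R : Type*} [CommSemiring R]

def shiftOn (k : ℕ) (p : ℕ → Prop) [DecidablePred p] : Module.End R (ℕ →₀ R) :=
  lsum R fun m => if p m then lsingle (m + k) else 0

theorem shiftOn_single (k : ℕ) (p : ℕ → Prop) [DecidablePred p] (m : ℕ) (b : R) :
    shiftOn k p (single m b) = if p m then single (m + k) b else 0 := by
  rw [shiftOn, lsum_single]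
  split_ifs <;> simp

theorem shiftOn_mul_shiftOn (k l : ℕ) (p q : ℕ → Prop) [DecidablePred p] [DecidablePred q] :
    shiftOn k p * shiftOn l q = (shiftOn (l + k) fun m => q m ∧ p (m + l) : Module.End R _) := by
  refine lhom_ext fun m b => ?_
  by_cases hq : q m <;> by_cases hp : p (m + l) <;>
    simp [Module.End.mul_apply, shiftOn_single, hq, hp, add_assoc]

theorem shiftOn_eq_zero {k : ℕ} {p : ℕ → Prop} [DecidablePred p] (h : ∀ m, ¬ p m) :
    (shiftOn k p : Module.End R _) = 0 :=
  lhom_ext fun m b => by simp [shiftOn_single, h]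

theorem shiftOn_add_shiftOn_not (k : ℕ) (p : ℕ → Prop) [DecidablePred p] :
    shiftOn k p + shiftOn k (¬ p ·) = (shiftOn k fun _ => True : Module.End R _) :=
  lhom_ext fun m b => by by_cases h : p m <;> simp [shiftOn_single, h]

theorem shiftOn_one_true_pow_single (n : ℕ) (b : R) :
    ((shiftOn 1 fun _ => True : Module.End R _) ^ n) (single 0 b) = single n b := by
  induction n with
  | zero => rfl
  | succ n ih => rw [pow_succ', Module.End.mul_apply, ih, shiftOn_single, if_pos trivial]

end Shift

/-- The walk of `e 0` under `T + S` reads `T, T, S, T, T, S, …`, which contains no `TTT`, `SS`,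
`STST` or `TSTS`. -/
def T : Module.End ℤ (ℕ →₀ ℤ) := shiftOn 1 (· % 3 ≠ 2)
def S : Module.End ℤ (ℕ →₀ ℤ) := shiftOn 1 (· % 3 = 2)

theorem T_pow_three : T ^ 3 = 0 := by
  rw [pow_three', T, shiftOn_mul_shiftOn, shiftOn_mul_shiftOn]
  exact shiftOn_eq_zero fun m => by omega

theorem S_sq : S ^ 2 = 0 := by
  rw [sq, S, shiftOn_mul_shiftOn]
  exact shiftOn_eq_zero fun m => by omega

theorem S_mul_T_mul_S_mul_T : S * T * S * T = 0 := by
  simp only [S, T, shiftOn_mul_shiftOn]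
  exact shiftOn_eq_zero fun m => by omega

theorem T_mul_S_mul_T_mul_S : T * S * T * S = 0 := by
  simp only [S, T, shiftOn_mul_shiftOn]
  exact shiftOn_eq_zero fun m => by omega

theorem T_add_S : T + S = shiftOn 1 fun _ => True := by
  rw [add_comm]; exact shiftOn_add_shiftOn_not 1 _

theorem surjective_apply_single_zero {A F : Type*} [Ring A]
    [FunLike F A (Module.End ℤ (ℕ →₀ ℤ))] [RingHomClass F A (Module.End ℤ (ℕ →₀ ℤ))] (ψ : F)
    (u : A) (hu : ψ u = shiftOn 1 fun _ => True) :
    Function.Surjective fun a => ψ a (single 0 1) := by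
  intro x
  induction x using Finsupp.induction_linear with
  | zero => exact ⟨0, by simp⟩
  | add x y hx hy =>
    obtain ⟨a, rfl⟩ := hx
    obtain ⟨b, rfl⟩ := hy
    exact ⟨a + b, by simp⟩
  | single m b =>
    exact ⟨b • u ^ m, by simp [hu, shiftOn_one_true_pow_single]⟩

section Presentation

variable {d : ℕ} {B : Type*} [Ring B] [Algebra (P19 d) B] (t s : B)
  (hbraid : s * t * s * t = t * s * t * s)
  (htpow : t ^ d =
    ∑ i : Fin d, algebraMap (P19 d) B (X (Fin.castLE (by omega) i)) * t ^ (i : ℕ))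
  (hssq : s ^ 2 = algebraMap (P19 d) B (X ⟨d, by omega⟩) * s
    + algebraMap (P19 d) B (X ⟨d + 1, by omega⟩))

def liftOfRelations : RingQuot (Rel19 d) →ₐ[P19 d] B :=
  RingQuot.liftAlgHom (P19 d) ⟨FreeAlgebra.lift (P19 d) ![t, s], fun _ _ h => by
    cases h <;> simp [hbraid, htpow, hssq]⟩

theorem liftOfRelations_mkAlgHom_ι (i : Fin 2) :
    liftOfRelations t s hbraid htpow hssq (RingQuot.mkAlgHom (P19 d) (Rel19 d) (FreeAlgebra.ι _ i))
      = ![t, s] i := by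
  simp [liftOfRelations]

end Presentation

end ArikiKoike

open ArikiKoike Finsupp in
/-- for d ≥ 3, the P-algebra with generators t, s and relations stst = tsts,
t^d = a_{d−1}·t^{d−1} + … + a₁·t + a₀, s² = α·s + β (β not inverted) is not finitely
generated as a P-module. -/
theorem ariki_koike_no_beta_inverse_not_finite (d : ℕ) (hd : 3 ≤ d) :
    ¬ Module.Finite (P19 d) (RingQuot (Rel19 d)) := by
  let : Algebra (P19 d) ℤ := constantCoeff.toAlgebra
  let : Module (P19 d) (ℕ →₀ ℤ) := Module.compHom _ (algebraMap (P19 d) ℤ)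
  have : IsScalarTower (P19 d) ℤ (ℕ →₀ ℤ) := .of_algebraMap_smul fun _ _ => rfl
  have hX (j : Fin (d + 2)) : algebraMap (P19 d) (Module.End ℤ (ℕ →₀ ℤ)) (X j) = 0 :=
    algebraMap_end_eq_zero (constantCoeff_X ℤ j)
  have hT : T ^ d = 0 := pow_eq_zero_of_le hd T_pow_three
  let ψ := liftOfRelations (d := d) T S (by rw [S_mul_T_mul_S_mul_T, T_mul_S_mul_T_mul_S])
    (by simp [hX, hT]) (by simp [hX, S_sq])
  have hψ : ψ (RingQuot.mkAlgHom (P19 d) (Rel19 d) (FreeAlgebra.ι _ 0 + FreeAlgebra.ι _ 1))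
      = shiftOn 1 fun _ => True := by
    simp [ψ, liftOfRelations_mkAlgHom_ι, T_add_S]
  intro hfin
  have : Module.Finite ℤ (ℕ →₀ ℤ) := Module.Finite.of_surjective_orbit ψ (single 0 1)
    (surjective_apply_single_zero ψ _ hψ)
  exact Infinite.not_finite (Module.Finite.finite_basis (Finsupp.basisSingleOne (R := ℤ) (ι := ℕ)))
end
end
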